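/- arXiv:2602.21479 — 2 statements merged into one kernel-verified Lean document; each statement's English description precedes it below -/
import Mathlib

section
/- Expected stopping time of the single-stream ONS test: Let (Z_t)_{t≥1} be i.i.d. random variables taking values in [−1,1] with Δ := E[Z_1] ≠ 0, let A_t = Σ_{j=1}^t Z_j and V_t = Σ_{j=1}^t Z_j², and let (W_t)_{t≥1} be a nonnegative stochastic process satisfying, almost surely for all t ≥ 1, ln(W_t) ≥ A_t² / (4(V_t + |A_t|)) − 2 ln(4t). Then for every α ∈ (0,1) the stopping time τ = inf{t ≥ 1 : W_t ≥ 1/α} satisfies E[τ] ≤ (128/Δ²) ln(256/(α·Δ²)) + (32/Δ²) ln(32/Δ²) + π²/6. -/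
open MeasureTheory ProbabilityTheory
open scoped ENNReal

/-- The stopping time `τ = inf {t ≥ 1 : W t ≥ 1/α}` (with value `∞` if the process never
crosses the threshold). -/
noncomputable def stopTime {Ω : Type*} (W : ℕ → Ω → ℝ) (α : ℝ) (ω : Ω) : ℕ∞ :=
  sInf {n : ℕ∞ | ∃ t : ℕ, n = (t : ℕ∞) ∧ 1 ≤ t ∧ 1 / α ≤ W t ω}

/-- The expected stopping time, computed as `E[τ] = ∑_{t ≥ 1} P(τ > t)`. -/
noncomputable def expStopTime {Ω : Type*} {m : MeasurableSpace Ω} (μ : Measure Ω)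
    (W : ℕ → Ω → ℝ) (α : ℝ) : ℝ≥0∞ :=
  ∑' t : ℕ, μ {ω | ((t + 1 : ℕ) : ℕ∞) < stopTime W α ω}

/-! If `τ > t`, then `W t < 1/α`, so the wealth bound gives
`A_t² / (8t) ≤ A_t² / (4 (V_t + |A_t|)) < log (1/α) + 2 log (4t)`. Once `t` exceeds the first
term of the bound, the right-hand side is at most `Δ² t / 32`, which forces `|A_t| ≤ |Δ| t / 2`,
an event of probability at most `exp (-Δ² t / 8)` by Hoeffding's inequality; once `t` also
exceeds the second term, this is at most `1 / t²`. Bounding `P(τ > t)` by `1` below the two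
thresholds and by `1 / t²` above them, `E[τ]` is at most their sum plus `∑ 1 / t² = π² / 6`. -/

open Real

lemma log_le_div_add_log_sub_one {t K : ℝ} (ht : 0 < t) (hK : 0 < K) :
    log t ≤ t / K + log K - 1 := by
  have := log_le_sub_one_of_pos (div_pos ht hK)
  rw [log_div ht.ne' hK.ne'] at this
  linarith

lemma log_one_div_add_two_mul_log_le {α Δ t : ℝ} (hα0 : 0 < α) (hα1 : α ≤ 1) (hΔ : Δ ≠ 0)
    (ht0 : 0 < t) (ht : 128 / Δ ^ 2 * log (256 / (α * Δ ^ 2)) ≤ t) :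
    log (1 / α) + 2 * log (4 * t) ≤ Δ ^ 2 * t / 32 := by
  set K := 128 / Δ ^ 2
  have hK : 0 < K := by positivity
  have hlogt := log_le_div_add_log_sub_one ht0 hK
  have hlogα : 0 ≤ log (1 / α) := log_nonneg (one_le_one_div hα0 hα1)
  have hlog2 : log 2 ≤ 1 := by linarith [log_le_sub_one_of_pos (zero_lt_two' ℝ)]
  have hlog4 : log 4 = 2 * log 2 := by
    rw [show (4 : ℝ) = 2 ^ 2 by norm_num, log_pow, Nat.cast_ofNat]
  have hB : log (256 / (α * Δ ^ 2)) = log 2 + log K + log (1 / α) := by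
    rw [← log_mul two_ne_zero hK.ne', ← log_mul (by positivity) (by positivity)]
    congr 1; simp only [K]; field_simp; norm_num
  have hBt : log (256 / (α * Δ ^ 2)) ≤ t / K := by rwa [le_div_iff₀ hK, mul_comm]
  have hΔt : Δ ^ 2 * t / 32 = 4 * (t / K) := by simp only [K]; field_simp; norm_num
  rw [log_mul four_ne_zero ht0.ne', hlog4, hΔt]
  linarith

lemma log_le_two_mul_div_of_mul_log_le {K t : ℝ} (hK : exp 1 ≤ K) (ht : K * log K ≤ t) :
    log t ≤ 2 * t / K := by
  have hK0 : 0 < K := (exp_pos 1).trans_le hK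
  have hL : 1 ≤ log K := by rwa [le_log_iff_exp_le hK0]
  have hKL : 0 < K * log K := by positivity
  have hs : 1 ≤ t / (K * log K) := (one_le_div hKL).2 ht
  have h := log_le_div_add_log_sub_one (hKL.trans_le ht) hKL
  rw [log_mul hK0.ne' (by positivity)] at h
  have hlogL := log_le_sub_one_of_pos (zero_lt_one.trans_le hL)
  have h2 : 2 * t / K = 2 * log K * (t / (K * log K)) := by field_simp
  rw [h2]
  nlinarith

lemma exp_neg_le_one_div_sq {Δ t : ℝ} (hΔ0 : Δ ≠ 0) (hΔ1 : Δ ^ 2 ≤ 1)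
    (ht : 32 / Δ ^ 2 * log (32 / Δ ^ 2) ≤ t) :
    exp (-(Δ ^ 2 * t / 8)) ≤ 1 / t ^ 2 := by
  have hK : exp 1 ≤ 32 / Δ ^ 2 := by
    rw [le_div_iff₀ (by positivity)]
    nlinarith [exp_one_lt_d9]
  have hlogt := log_le_two_mul_div_of_mul_log_le hK ht
  have ht0 : 0 < t := by
    have : 0 < 32 / Δ ^ 2 * log (32 / Δ ^ 2) :=
      mul_pos ((exp_pos 1).trans_le hK) (log_pos (by linarith [add_one_le_exp 1]))
    linarith
  calc exp (-(Δ ^ 2 * t / 8)) ≤ exp (-log (t ^ 2)) := by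
        rw [exp_le_exp, log_pow]
        have : 2 * t / (32 / Δ ^ 2) = Δ ^ 2 * t / 16 := by field_simp; norm_num
        push_cast
        linarith
    _ = 1 / t ^ 2 := by rw [exp_neg, exp_log (by positivity), one_div]

lemma sq_div_le_sq_div_sum_sq_add_abs {ι : Type*} {s : Finset ι} {z : ι → ℝ}
    (hz : ∀ j ∈ s, |z j| ≤ 1) :
    (∑ j ∈ s, z j) ^ 2 / (8 * s.card) ≤
      (∑ j ∈ s, z j) ^ 2 / (4 * ((∑ j ∈ s, z j ^ 2) + |∑ j ∈ s, z j|)) := by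
  set A := ∑ j ∈ s, z j
  set V := ∑ j ∈ s, z j ^ 2
  rcases eq_or_ne A 0 with hA | hA
  · simp [hA]
  have hV0 : 0 ≤ V := Finset.sum_nonneg fun j _ ↦ sq_nonneg _
  have hV : V ≤ s.card := by
    simpa using Finset.sum_le_sum fun j hj ↦ (sq_le_one_iff_abs_le_one _).2 (hz j hj)
  have hAcard : |A| ≤ s.card :=
    (Finset.abs_sum_le_sum_abs _ _).trans (by simpa using Finset.sum_le_sum hz)
  exact div_le_div_of_nonneg_left (sq_nonneg A) (by positivity) (by linarith)

lemma lt_one_div_of_lt_stopTime {Ω : Type*} {W : ℕ → Ω → ℝ} {α : ℝ} {ω : Ω} {t : ℕ}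
    (ht : 1 ≤ t) (h : (t : ℕ∞) < stopTime W α ω) : W t ω < 1 / α := by
  by_contra! hW
  exact h.not_ge (sInf_le ⟨t, rfl, ht, hW⟩)

section Hoeffding

variable {Ω : Type*} {m : MeasurableSpace Ω} {μ : Measure Ω} [IsProbabilityMeasure μ]

lemma measureReal_sum_le_half_mul_le_exp {Y : ℕ → Ω → ℝ} (h_indep : iIndepFun Y μ)
    (hmeas : ∀ i, AEMeasurable (Y i) μ) (hbdd : ∀ i, ∀ᵐ ω ∂μ, Y i ω ∈ Set.Icc (-1) 1)
    {a : ℝ} (hmean : ∀ i, μ[Y i] = a) (ha : 0 ≤ a) (n : ℕ) :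
    μ.real {ω | ∑ i ∈ Finset.range n, Y i ω ≤ a * n / 2} ≤ exp (-(a ^ 2 * n / 8)) := by
  have hsubG : ∀ i < n, HasSubgaussianMGF (fun ω ↦ a - Y i ω) 1 μ := by
    intro i _
    convert (hasSubgaussianMGF_of_mem_Icc (hmeas i) (hbdd i)).neg using 1
    · ext ω; simp [hmean i]
    · norm_num
  have hindep : iIndepFun (fun i ω ↦ a - Y i ω) μ :=
    h_indep.comp (fun _ y ↦ a - y) fun _ ↦ by fun_prop
  calc μ.real {ω | ∑ i ∈ Finset.range n, Y i ω ≤ a * n / 2}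
      ≤ μ.real {ω | a * n / 2 ≤ ∑ i ∈ Finset.range n, (a - Y i ω)} := by
        refine measureReal_mono fun ω hω ↦ ?_
        simp only [Set.mem_ofPred_eq, Finset.sum_sub_distrib, Finset.sum_const,
          Finset.card_range, nsmul_eq_mul] at hω ⊢
        linarith
    _ ≤ exp (-(a * n / 2) ^ 2 / (2 * n * (1 : NNReal))) :=
        HasSubgaussianMGF.measure_sum_range_ge_le_of_iIndepFun hindep hsubG (by positivity)
    _ = exp (-(a ^ 2 * n / 8)) := by
        rcases eq_or_ne n 0 with rfl | hn
        · simp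
        · rw [NNReal.coe_one, mul_one]; congr 1; field_simp; ring

lemma measureReal_abs_sum_le_half_mul_le_exp {Y : ℕ → Ω → ℝ} (h_indep : iIndepFun Y μ)
    (hmeas : ∀ i, AEMeasurable (Y i) μ) (hbdd : ∀ i, ∀ᵐ ω ∂μ, Y i ω ∈ Set.Icc (-1) 1)
    {a : ℝ} (hmean : ∀ i, μ[Y i] = a) (n : ℕ) :
    μ.real {ω | |∑ i ∈ Finset.range n, Y i ω| ≤ |a| * n / 2} ≤ exp (-(a ^ 2 * n / 8)) := by
  rcases le_total 0 a with ha | ha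
  · refine (measureReal_mono fun ω hω ↦ ?_).trans
      (measureReal_sum_le_half_mul_le_exp h_indep hmeas hbdd hmean ha n)
    simp only [Set.mem_ofPred_eq, abs_of_nonneg ha] at hω ⊢
    exact (le_abs_self _).trans hω
  · have hneg := measureReal_sum_le_half_mul_le_exp (Y := fun i ω ↦ -Y i ω)
      (h_indep.comp (fun _ y ↦ -y) fun _ ↦ measurable_neg) (fun i ↦ (hmeas i).neg)
      (fun i ↦ (hbdd i).mono fun ω h ↦ by simp only [Set.mem_Icc] at h ⊢; constructor <;> linarith)
      (fun i ↦ by rw [integral_neg, hmean i]) (neg_nonneg.2 ha) n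
    rw [neg_sq] at hneg
    refine (measureReal_mono fun ω hω ↦ ?_).trans hneg
    simp only [Set.mem_ofPred_eq, abs_of_nonpos ha, Finset.sum_neg_distrib] at hω ⊢
    exact (neg_le_abs _).trans hω

end Hoeffding

lemma tsum_le_ofReal_add_pi_sq_div_six {f : ℕ → ℝ≥0∞} {T : ℝ} (hT : 0 ≤ T)
    (hf_le_one : ∀ n, f n ≤ 1)
    (hf_tail : ∀ n : ℕ, T ≤ n + 1 → f n ≤ ENNReal.ofReal (1 / ((n : ℝ) + 1) ^ 2)) :
    ∑' n, f n ≤ ENNReal.ofReal (T + π ^ 2 / 6) := by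
  set N := ⌊T⌋₊
  have hbasel : HasSum (fun n : ℕ ↦ 1 / ((n : ℝ) + 1) ^ 2) (π ^ 2 / 6) := by
    simpa using (hasSum_nat_add_iff' 1).2 hasSum_zeta_two
  have hhead : ∑' n : ℕ, (if n < N then (1 : ℝ≥0∞) else 0) = N := by
    rw [tsum_eq_sum (s := Finset.range N) fun n hn ↦ if_neg (by simpa using hn),
      Finset.sum_ite_of_true fun n hn ↦ Finset.mem_range.1 hn]
    simp
  calc ∑' n, f n
      ≤ ∑' n : ℕ, ((if n < N then 1 else 0) + ENNReal.ofReal (1 / ((n : ℝ) + 1) ^ 2)) := by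
        refine ENNReal.tsum_le_tsum fun n ↦ ?_
        split_ifs with hn
        · exact (hf_le_one n).trans le_self_add
        · refine (hf_tail n ?_).trans le_add_self
          have := Nat.lt_floor_add_one T
          have : (N : ℝ) ≤ n := by exact_mod_cast not_lt.1 hn
          linarith
    _ = ENNReal.ofReal N + ENNReal.ofReal (π ^ 2 / 6) := by
        rw [ENNReal.tsum_add, hhead, ENNReal.ofReal_natCast,
          ← ENNReal.ofReal_tsum_of_nonneg (fun n ↦ by positivity) hbasel.summable, hbasel.tsum_eq]
    _ ≤ ENNReal.ofReal (T + π ^ 2 / 6) := by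
        rw [← ENNReal.ofReal_add (Nat.cast_nonneg _) (by positivity)]
        exact ENNReal.ofReal_le_ofReal (by linarith [Nat.floor_le hT])

lemma measure_lt_stopTime_le {Ω : Type*} {m : MeasurableSpace Ω} {μ : Measure Ω}
    [IsProbabilityMeasure μ] {Z W : ℕ → Ω → ℝ} {Δ α : ℝ}
    (hZmeas : ∀ t, Measurable (Z t))
    (hZbdd : ∀ t, 1 ≤ t → ∀ ω, Z t ω ∈ Set.Icc (-1 : ℝ) 1)
    (hiid : iIndepFun (fun t : ℕ ↦ Z (t + 1)) μ)
    (hmean : ∀ i : ℕ, μ[Z (i + 1)] = Δ) (hΔ0 : Δ ≠ 0) (hΔ1 : Δ ^ 2 ≤ 1)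
    (hWnonneg : ∀ t, 1 ≤ t → ∀ᵐ ω ∂μ, 0 ≤ W t ω)
    (hlogW : ∀ᵐ ω ∂μ, ∀ t : ℕ, 1 ≤ t →
      (∑ j ∈ Finset.Icc 1 t, Z j ω) ^ 2 /
          (4 * ((∑ j ∈ Finset.Icc 1 t, (Z j ω) ^ 2) + |∑ j ∈ Finset.Icc 1 t, Z j ω|)) -
        2 * log (4 * t) ≤ log (W t ω))
    (hα0 : 0 < α) (hα1 : α < 1) {t : ℕ}
    (hT1 : 128 / Δ ^ 2 * log (256 / (α * Δ ^ 2)) ≤ t)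
    (hT2 : 32 / Δ ^ 2 * log (32 / Δ ^ 2) ≤ t) :
    μ {ω | (t : ℕ∞) < stopTime W α ω} ≤ ENNReal.ofReal (1 / (t : ℝ) ^ 2) := by
  have hexp := exp_neg_le_one_div_sq hΔ0 hΔ1 hT2
  have ht1 : 1 ≤ t := by
    have : (0 : ℝ) < 1 / (t : ℝ) ^ 2 := (exp_pos _).trans_le hexp
    rw [Nat.one_le_iff_ne_zero]
    rintro rfl
    simp at this
  have ht0 : (0 : ℝ) < t := by exact_mod_cast ht1
  have hsub : ∀ᵐ ω ∂μ, ω ∈ {ω | (t : ℕ∞) < stopTime W α ω} →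
      ω ∈ {ω | |∑ i ∈ Finset.range t, Z (i + 1) ω| ≤ |Δ| * t / 2} := by
    filter_upwards [hlogW, hWnonneg t ht1] with ω hlog hW0 hτ
    set A := ∑ j ∈ Finset.Icc 1 t, Z j ω
    have hlogW_lt : log (W t ω) < log (1 / α) := by
      rcases hW0.eq_or_lt with h | h
      -- `log 0 = 0`, so this case needs `α < 1` rather than `α ≤ 1`
      · rw [← h, log_zero]; exact log_pos (one_lt_one_div hα0 hα1)
      · exact log_lt_log h (lt_one_div_of_lt_stopTime ht1 hτ)
    have hA : A ^ 2 / (8 * t) < Δ ^ 2 * t / 32 := by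
      have := sq_div_le_sq_div_sum_sq_add_abs (s := Finset.Icc 1 t) (z := fun j ↦ Z j ω)
        fun j hj ↦ abs_le.2 (hZbdd j (Finset.mem_Icc.1 hj).1 ω)
      simp only [Nat.card_Icc, add_tsub_cancel_right] at this
      linarith [hlog t ht1, log_one_div_add_two_mul_log_le hα0 hα1.le hΔ0 ht0 hT1]
    have hAsq : A ^ 2 < (|Δ| * t / 2) ^ 2 := by
      rw [div_lt_iff₀ (by positivity)] at hA
      nlinarith [sq_abs Δ]
    have hsum : ∑ i ∈ Finset.range t, Z (i + 1) ω = A := by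
      rw [Finset.range_eq_Ico, Finset.sum_Ico_add' (fun j ↦ Z j ω), zero_add,
        Finset.Ico_add_one_right_eq_Icc]
    rw [hsum]
    exact (abs_lt_of_sq_lt_sq hAsq (by positivity)).le
  calc μ {ω | (t : ℕ∞) < stopTime W α ω}
      ≤ μ {ω | |∑ i ∈ Finset.range t, Z (i + 1) ω| ≤ |Δ| * t / 2} := measure_mono_ae hsub
    _ = ENNReal.ofReal (μ.real {ω | |∑ i ∈ Finset.range t, Z (i + 1) ω| ≤ |Δ| * t / 2}) :=
        (ofReal_measureReal).symm
    _ ≤ ENNReal.ofReal (1 / (t : ℝ) ^ 2) := by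
        refine ENNReal.ofReal_le_ofReal (le_trans ?_ hexp)
        exact measureReal_abs_sum_le_half_mul_le_exp hiid (fun i ↦ (hZmeas _).aemeasurable)
          (fun i ↦ .of_forall (hZbdd (i + 1) (Nat.le_add_left 1 i))) hmean t

theorem ons_test_expected_stopping_time_general
    {Ω : Type*} {m : MeasurableSpace Ω} {μ : Measure Ω} [IsProbabilityMeasure μ]
    (Z W : ℕ → Ω → ℝ) (Δ : ℝ)
    (hZmeas : ∀ t : ℕ, Measurable (Z t))
    (hZbdd : ∀ t : ℕ, 1 ≤ t → ∀ ω, Z t ω ∈ Set.Icc (-1 : ℝ) 1)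
    (hiid : iIndepFun (fun t : ℕ => Z (t + 1)) μ)
    (hident : ∀ t : ℕ, 1 ≤ t → IdentDistrib (Z t) (Z 1) μ μ)
    (hΔ : Δ = ∫ ω, Z 1 ω ∂μ) (hΔne : Δ ≠ 0)
    (hWnonneg : ∀ t : ℕ, 1 ≤ t → ∀ᵐ ω ∂μ, 0 ≤ W t ω)
    (hlogW : ∀ᵐ ω ∂μ, ∀ t : ℕ, 1 ≤ t →
      (∑ j ∈ Finset.Icc 1 t, Z j ω) ^ 2 /
          (4 * ((∑ j ∈ Finset.Icc 1 t, (Z j ω) ^ 2) + |∑ j ∈ Finset.Icc 1 t, Z j ω|)) -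
        2 * Real.log (4 * t) ≤ Real.log (W t ω))
    {α : ℝ} (hα : α ∈ Set.Ioo (0 : ℝ) 1) :
    expStopTime μ W α ≤
      ENNReal.ofReal ((128 / Δ ^ 2) * Real.log (256 / (α * Δ ^ 2)) +
        (32 / Δ ^ 2) * Real.log (32 / Δ ^ 2) + Real.pi ^ 2 / 6) := by
  obtain ⟨hα0, hα1⟩ := hα
  have hmean : ∀ i : ℕ, μ[Z (i + 1)] = Δ := fun i ↦ by
    rw [(hident (i + 1) (Nat.le_add_left 1 i)).integral_eq, hΔ]
  have hΔ1 : Δ ^ 2 ≤ 1 := by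
    refine (sq_le_one_iff_abs_le_one Δ).2 ?_
    simpa [hΔ] using norm_integral_le_of_norm_le_const (μ := μ) (f := Z 1)
      (.of_forall fun ω ↦ (Real.norm_eq_abs _).trans_le (abs_le.2 (hZbdd 1 le_rfl ω)))
  have hT1 : 0 ≤ 128 / Δ ^ 2 * log (256 / (α * Δ ^ 2)) := by
    refine mul_nonneg (by positivity) (log_nonneg ?_)
    rw [one_le_div (by positivity)]
    nlinarith [mul_le_mul hα1.le hΔ1 (sq_nonneg Δ) zero_le_one]
  have hT2 : 0 ≤ 32 / Δ ^ 2 * log (32 / Δ ^ 2) := by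
    refine mul_nonneg (by positivity) (log_nonneg ?_)
    rw [one_le_div (by positivity)]
    linarith
  refine tsum_le_ofReal_add_pi_sq_div_six (add_nonneg hT1 hT2) (fun n ↦ prob_le_one)
    fun n hn ↦ ?_
  have := measure_lt_stopTime_le (t := n + 1) hZmeas hZbdd hiid hmean hΔne hΔ1 hWnonneg hlogW
    hα0 hα1 (by push_cast; linarith) (by push_cast; linarith)
  simpa using this

/-- **Expected stopping time of the single-stream ONS test.**  If `(Z t)_{t ≥ 1}` are i.i.d.
`[-1,1]`-valued with mean `Δ ≠ 0`, and `(W t)_{t ≥ 1}` is a nonnegative process satisfying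
the ONS logarithmic-wealth lower bound
`ln (W t) ≥ A t ^ 2 / (4 (V t + |A t|)) - 2 ln (4 t)`
(where `A t = ∑_{j=1}^t Z j` and `V t = ∑_{j=1}^t (Z j)^2`), then for every `α ∈ (0,1)`
the stopping time `τ = inf {t ≥ 1 : W t ≥ 1/α}` satisfies
`E[τ] ≤ (128/Δ²) ln (256/(α Δ²)) + (32/Δ²) ln (32/Δ²) + π²/6`. -/
theorem ons_test_expected_stopping_time
    {Ω : Type*} {m : MeasurableSpace Ω} {μ : Measure Ω} [IsProbabilityMeasure μ]
    (Z W : ℕ → Ω → ℝ) (Δ : ℝ)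
    (hZmeas : ∀ t : ℕ, Measurable (Z t))
    (hZbdd : ∀ t : ℕ, 1 ≤ t → ∀ ω, Z t ω ∈ Set.Icc (-1 : ℝ) 1)
    (hiid : iIndepFun (fun t : ℕ => Z (t + 1)) μ)
    (hident : ∀ t : ℕ, 1 ≤ t → IdentDistrib (Z t) (Z 1) μ μ)
    (hΔ : Δ = ∫ ω, Z 1 ω ∂μ) (hΔne : Δ ≠ 0)
    (hWmeas : ∀ t : ℕ, Measurable (W t))
    (hWnonneg : ∀ t : ℕ, 1 ≤ t → ∀ᵐ ω ∂μ, 0 ≤ W t ω)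
    (hlogW : ∀ᵐ ω ∂μ, ∀ t : ℕ, 1 ≤ t →
      (∑ j ∈ Finset.Icc 1 t, Z j ω) ^ 2 /
          (4 * ((∑ j ∈ Finset.Icc 1 t, (Z j ω) ^ 2) + |∑ j ∈ Finset.Icc 1 t, Z j ω|)) -
        2 * Real.log (4 * t) ≤ Real.log (W t ω))
    {α : ℝ} (hα : α ∈ Set.Ioo (0 : ℝ) 1) :
    expStopTime μ W α ≤
      ENNReal.ofReal ((128 / Δ ^ 2) * Real.log (256 / (α * Δ ^ 2)) +
        (32 / Δ ^ 2) * Real.log (32 / Δ ^ 2) + Real.pi ^ 2 / 6) :=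
  ons_test_expected_stopping_time_general (m := m) Z W Δ hZmeas hZbdd hiid hident hΔ hΔne hWnonneg
    hlogW hα
end

section
/- Regret of entropic follow-the-regularized-leader over the ℓ¹ ball: Let k ≥ 1 and let (Z⃗_t)_{t≥1} be any sequence of vectors in [−1,1]^k. Define the augmented vectors Z̃_t = (Z⃗_t, −Z⃗_t) ∈ [−1,1]^{2k}, the cumulative sums G_t = Σ_{j=1}^{t−1} Z̃_j ∈ ℝ^{2k} (with G_1 = 0), and for each t ≥ 1 the probability vector v_t ∈ ℝ^{2k} with coordinates v_{t,ℓ} = exp(√(ln(2k)/t)·G_{t,ℓ}) / Σ_{ℓ'=1}^{2k} exp(√(ln(2k)/t)·G_{t,ℓ'}); write v_t = (v_t⁺, v_t⁻) with v_t⁺, v_t⁻ ∈ ℝ^k and set u_t = v_t⁺ − v_t⁻. Then for every t ≥ 1, Σ_{j=1}^t ⟨u_j, Z⃗_j⟩ ≥ max_{u ∈ ℝ^k, ‖u‖₁ ≤ 1} Σ_{j=1}^t ⟨u, Z⃗_j⟩ − 2√(t·ln(2k)). -/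
/-!
Run exponential weights on the `N = 2k` experts `±eᵢ`, the vertices of the ℓ¹ ball, with the
learning rate `η_j = √(log N / j)`. The potential `Φ(η, g) = η⁻¹ log (N⁻¹ ∑ₗ exp (η gₗ))` is at
least `max g - η⁻¹ log N`. By Hoeffding's lemma one round raises `Φ(η, G)` by at most the
learner's gain plus `η / 2`, and by the power-mean inequality `Φ` is nondecreasing in `η`, so
shrinking the learning rate never raises it. Summing the rounds,
`max G_{t+1} ≤ ∑ⱼ ⟨vⱼ, Z̃ⱼ⟩ + ∑ⱼ ηⱼ / 2 + η_t⁻¹ log N ≤ ∑ⱼ ⟨uⱼ, Zⱼ⟩ + 2 √(t log N)`, and a linear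
functional on the ℓ¹ ball is maximized at a vertex.
-/

open Real Finset

-- Hoeffding's lemma for the distribution `p` on a finite type.
open MeasureTheory ProbabilityTheory in
lemma sum_mul_exp_le_exp {ι : Type*} [Fintype ι] {p z : ι → ℝ} (hp : ∀ ℓ, 0 ≤ p ℓ)
    (hp1 : ∑ ℓ, p ℓ = 1) (hz : ∀ ℓ, z ℓ ∈ Set.Icc (-1 : ℝ) 1) (c : ℝ) :
    ∑ ℓ, p ℓ * exp (c * z ℓ) ≤ exp (c * ∑ ℓ, p ℓ * z ℓ + c ^ 2 / 2) := by
  let _ : MeasurableSpace ι := ⊤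
  let P : PMF ι := PMF.ofFintype (fun ℓ ↦ ENNReal.ofReal (p ℓ)) (by
    rw [← ENNReal.ofReal_sum_of_nonneg fun ℓ _ ↦ hp ℓ, hp1, ENNReal.ofReal_one])
  have hP (f : ι → ℝ) : ∫ ℓ, f ℓ ∂P.toMeasure = ∑ ℓ, p ℓ * f ℓ := by
    simp [P, PMF.integral_eq_sum, ENNReal.toReal_ofReal (hp _)]
  have hoeffding := (hasSubgaussianMGF_of_mem_Icc (μ := P.toMeasure)
    (measurable_of_finite z).aemeasurable (ae_of_all _ hz)).mgf_le c
  simp only [mgf, hP] at hoeffding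
  have hnorm : ((‖(1 : ℝ) - -1‖₊ / 2) ^ 2 : NNReal) = 1 := by norm_num
  rw [hnorm, NNReal.coe_one, one_mul] at hoeffding
  set m := ∑ ℓ, p ℓ * z ℓ
  calc ∑ ℓ, p ℓ * exp (c * z ℓ) = exp (c * m) * ∑ ℓ, p ℓ * exp (c * (z ℓ - m)) := by
        rw [mul_sum]; congr! 1 with ℓ; rw [mul_left_comm, ← exp_add]; ring_nf
    _ ≤ exp (c * m) * exp (c ^ 2 / 2) := by gcongr
    _ = exp (c * m + c ^ 2 / 2) := (exp_add _ _).symm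

lemma sum_Icc_inv_sqrt_le (t : ℕ) : ∑ j ∈ Icc 1 t, (√(j : ℝ))⁻¹ ≤ 2 * √(t : ℝ) := by
  induction t with
  | zero => simp
  | succ t ih =>
    rw [sum_Icc_succ_top (by omega)]
    have hlt : 0 < √((t + 1 : ℕ) : ℝ) := sqrt_pos.mpr (by positivity)
    have hle : √(t : ℝ) ≤ √((t + 1 : ℕ) : ℝ) := sqrt_le_sqrt (by push_cast; linarith)
    have hsq : √((t + 1 : ℕ) : ℝ) ^ 2 - √(t : ℝ) ^ 2 = 1 := by
      rw [sq_sqrt (by positivity), sq_sqrt (by positivity)]; push_cast; ring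
    -- `1 = (√(t+1) - √t) (√(t+1) + √t) ≤ 2 √(t+1) (√(t+1) - √t)`
    have hstep : (√((t + 1 : ℕ) : ℝ))⁻¹ ≤ 2 * (√((t + 1 : ℕ) : ℝ) - √(t : ℝ)) := by
      rw [inv_le_iff_one_le_mul₀ hlt]; nlinarith
    linarith

namespace ExponentialWeights

section

variable {ι : Type*} [Fintype ι]

noncomputable def gibbs (η : ℝ) (g : ι → ℝ) (ℓ : ι) : ℝ := exp (η * g ℓ) / ∑ ℓ', exp (η * g ℓ')

noncomputable def logMeanExp (η : ℝ) (g : ι → ℝ) : ℝ :=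
  log (∑ ℓ, (Fintype.card ι : ℝ)⁻¹ * exp (η * g ℓ)) / η

lemma gibbs_nonneg (η : ℝ) (g : ι → ℝ) (ℓ : ι) : 0 ≤ gibbs η g ℓ := by
  unfold gibbs; positivity

variable [Nonempty ι]

lemma sum_gibbs (η : ℝ) (g : ι → ℝ) : ∑ ℓ, gibbs η g ℓ = 1 := by
  simp only [gibbs, ← sum_div]
  exact div_self (sum_pos (fun ℓ _ ↦ exp_pos _) univ_nonempty).ne'

lemma sum_inv_card_mul_exp_pos (η : ℝ) (g : ι → ℝ) :
    0 < ∑ ℓ, (Fintype.card ι : ℝ)⁻¹ * exp (η * g ℓ) :=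
  sum_pos (fun ℓ _ ↦ by positivity) univ_nonempty

lemma logMeanExp_zero_right (η : ℝ) : logMeanExp η (0 : ι → ℝ) = 0 := by
  simp [logMeanExp]

lemma le_logMeanExp_add {η : ℝ} (hη : 0 < η) (g : ι → ℝ) (ℓ : ι) :
    g ℓ ≤ logMeanExp η g + log (Fintype.card ι) / η := by
  have hN : (0 : ℝ) < Fintype.card ι := by exact_mod_cast Fintype.card_pos
  have hsingle : (Fintype.card ι : ℝ)⁻¹ * exp (η * g ℓ) ≤
      ∑ ℓ', (Fintype.card ι : ℝ)⁻¹ * exp (η * g ℓ') :=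
    single_le_sum (f := fun ℓ' ↦ (Fintype.card ι : ℝ)⁻¹ * exp (η * g ℓ'))
      (fun _ _ ↦ by positivity) (mem_univ ℓ)
  have hlog := log_le_log (by positivity) hsingle
  rw [log_mul (by positivity) (exp_pos _).ne', log_inv, log_exp] at hlog
  rw [logMeanExp, ← add_div, le_div_iff₀ hη]
  linarith

lemma logMeanExp_mono {a b : ℝ} (ha : 0 < a) (hab : a ≤ b) (g : ι → ℝ) :
    logMeanExp a g ≤ logMeanExp b g := by
  have hb := ha.trans_le hab
  have hN : (0 : ℝ) < Fintype.card ι := by exact_mod_cast Fintype.card_pos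
  have jensen := rpow_arith_mean_le_arith_mean_rpow univ (fun _ ↦ (Fintype.card ι : ℝ)⁻¹)
    (fun ℓ ↦ exp (a * g ℓ)) (fun _ _ ↦ by positivity)
    (by simp [sum_const, card_univ, hN.ne']) (fun _ _ ↦ (exp_pos _).le)
    ((one_le_div ha).mpr hab)
  simp only [← exp_mul] at jensen
  have hexp : ∀ ℓ, a * g ℓ * (b / a) = b * g ℓ := fun ℓ ↦ by field_simp
  simp only [hexp] at jensen
  have hlog := log_le_log (by positivity) jensen
  rw [log_rpow (sum_inv_card_mul_exp_pos a g)] at hlog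
  rw [logMeanExp, logMeanExp, div_le_div_iff₀ ha hb]
  calc _ = b / a * log (∑ ℓ, (Fintype.card ι : ℝ)⁻¹ * exp (a * g ℓ)) * a := by field_simp
    _ ≤ _ := by gcongr

lemma logMeanExp_add_le {η : ℝ} (hη : 0 < η) (g z : ι → ℝ) (hz : ∀ ℓ, z ℓ ∈ Set.Icc (-1 : ℝ) 1) :
    logMeanExp η (g + z) ≤ logMeanExp η g + ∑ ℓ, gibbs η g ℓ * z ℓ + η / 2 := by
  set M := ∑ ℓ, (Fintype.card ι : ℝ)⁻¹ * exp (η * g ℓ)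
  have hM : 0 < M := sum_inv_card_mul_exp_pos η g
  have hsplit : ∑ ℓ, (Fintype.card ι : ℝ)⁻¹ * exp (η * (g + z) ℓ) =
      M * ∑ ℓ, gibbs η g ℓ * exp (η * z ℓ) := by
    have hW : ∑ ℓ, exp (η * g ℓ) = Fintype.card ι * M := by
      rw [mul_sum]
      refine sum_congr rfl fun ℓ _ ↦ ?_
      have : (Fintype.card ι : ℝ) ≠ 0 := by exact_mod_cast Fintype.card_ne_zero
      field_simp
    simp only [gibbs, hW, mul_sum, Pi.add_apply, mul_add, exp_add]
    refine sum_congr rfl fun ℓ _ ↦ ?_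
    field_simp
  have hstep := log_le_log (sum_inv_card_mul_exp_pos η (g + z))
    (hsplit.trans_le (mul_le_mul_of_nonneg_left
      (sum_mul_exp_le_exp (gibbs_nonneg η g) (sum_gibbs η g) hz η) hM.le))
  rw [log_mul hM.ne' (exp_pos _).ne', log_exp] at hstep
  rw [logMeanExp, logMeanExp, div_le_iff₀ hη]
  calc _ ≤ _ := hstep
    _ = _ := by rw [add_mul, add_mul, div_mul_cancel₀ _ hη.ne']; ring

theorem regret_le {z G : ℕ → ι → ℝ} {η : ℕ → ℝ}
    (hz : ∀ j, 1 ≤ j → ∀ ℓ, z j ℓ ∈ Set.Icc (-1 : ℝ) 1)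
    (hG₁ : G 1 = 0) (hG : ∀ j, 1 ≤ j → G (j + 1) = G j + z j)
    (hη : ∀ j, 1 ≤ j → 0 < η j) (hη_anti : ∀ j, 1 ≤ j → η (j + 1) ≤ η j)
    {t : ℕ} (ht : 1 ≤ t) (ℓ : ι) :
    G (t + 1) ℓ ≤ ∑ j ∈ Icc 1 t, (∑ ℓ', gibbs (η j) (G j) ℓ' * z j ℓ' + η j / 2) +
      log (Fintype.card ι) / η t := by
  have potential : logMeanExp (η t) (G (t + 1)) ≤
      ∑ j ∈ Icc 1 t, (∑ ℓ', gibbs (η j) (G j) ℓ' * z j ℓ' + η j / 2) := by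
    induction t, ht using Nat.le_induction with
    | base =>
      have h₀ : logMeanExp (η 1) (G 1) = 0 := by rw [hG₁]; exact logMeanExp_zero_right _
      have := logMeanExp_add_le (hη 1 le_rfl) (G 1) (z 1) (hz 1 le_rfl)
      rw [← hG 1 le_rfl, h₀] at this
      simpa using this
    | succ s hs ih =>
      rw [sum_Icc_succ_top (by omega)]
      calc logMeanExp (η (s + 1)) (G (s + 1 + 1))
          ≤ logMeanExp (η (s + 1)) (G (s + 1)) +
              (∑ ℓ', gibbs (η (s + 1)) (G (s + 1)) ℓ' * z (s + 1) ℓ' + η (s + 1) / 2) := by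
            rw [hG (s + 1) (by omega), ← add_assoc]
            exact logMeanExp_add_le (hη _ (by omega)) _ _ (hz _ (by omega))
        _ ≤ logMeanExp (η s) (G (s + 1)) +
              (∑ ℓ', gibbs (η (s + 1)) (G (s + 1)) ℓ' * z (s + 1) ℓ' + η (s + 1) / 2) := by
            gcongr
            exact logMeanExp_mono (hη _ (by omega)) (hη_anti s hs) _
        _ ≤ _ := by gcongr
  linarith [le_logMeanExp_add (hη t ht) (G (t + 1)) ℓ]

end

theorem regret_le_two_sqrt {ι : Type*} [Fintype ι] (hι : 1 < Fintype.card ι) {z G : ℕ → ι → ℝ}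
    (hz : ∀ j, 1 ≤ j → ∀ ℓ, z j ℓ ∈ Set.Icc (-1 : ℝ) 1)
    (hG₁ : G 1 = 0) (hG : ∀ j, 1 ≤ j → G (j + 1) = G j + z j) {t : ℕ} (ht : 1 ≤ t) (ℓ : ι) :
    G (t + 1) ℓ ≤ ∑ j ∈ Icc 1 t, ∑ ℓ', gibbs √(log (Fintype.card ι) / j) (G j) ℓ' * z j ℓ' +
      2 * √(t * log (Fintype.card ι)) := by
  have : Nonempty ι := Fintype.card_pos_iff.mp (by omega)
  set L := log (Fintype.card ι)
  have hL : 0 < L := log_pos (by exact_mod_cast hι)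
  have hη (j : ℕ) (hj : 1 ≤ j) : 0 < √(L / j) := sqrt_pos.mpr (by positivity)
  have hη_anti (j : ℕ) (hj : 1 ≤ j) : √(L / (j + 1 : ℕ)) ≤ √(L / j) :=
    sqrt_le_sqrt (div_le_div_of_nonneg_left hL.le (by positivity) (by push_cast; linarith))
  have hsum : ∑ j ∈ Icc 1 t, √(L / j) / 2 ≤ √(t * L) := by
    calc ∑ j ∈ Icc 1 t, √(L / j) / 2 = √L / 2 * ∑ j ∈ Icc 1 t, (√(j : ℝ))⁻¹ := by
          rw [mul_sum]; simp only [sqrt_div' _ (Nat.cast_nonneg _)]; congr! 1; ring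
      _ ≤ √L / 2 * (2 * √(t : ℝ)) := by gcongr; exact sum_Icc_inv_sqrt_le t
      _ = √(t * L) := by rw [sqrt_mul (Nat.cast_nonneg _)]; ring
  have hlast : L / √(L / t) = √(t * L) := by
    rw [sqrt_div' _ (Nat.cast_nonneg _), sqrt_mul (Nat.cast_nonneg _)]
    have : 0 < √L := sqrt_pos.mpr hL
    field_simp
    rw [sq_sqrt hL.le]
  have := regret_le hz hG₁ hG hη hη_anti ht ℓ
  rw [sum_add_distrib, hlast] at this
  linarith

end ExponentialWeights

lemma sum_mul_le_of_sum_abs_le_one {ι : Type*} [Fintype ι] [Nonempty ι] {w x : ι → ℝ} {B : ℝ}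
    (hw : ∑ i, |w i| ≤ 1) (hx : ∀ i, |x i| ≤ B) : ∑ i, w i * x i ≤ B := by
  have hB : 0 ≤ B := (abs_nonneg _).trans (hx (Classical.arbitrary ι))
  calc ∑ i, w i * x i ≤ ∑ i, |w i| * B :=
        sum_le_sum fun i _ ↦ (le_abs_self _).trans (by rw [abs_mul]; gcongr; exact hx i)
    _ = (∑ i, |w i|) * B := (sum_mul _ _ _).symm
    _ ≤ B := mul_le_of_le_one_left hB hw

lemma sum_mul_sum_elim_neg {α : Type*} [Fintype α] (p : α ⊕ α → ℝ) (z : α → ℝ) :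
    ∑ ℓ, p ℓ * Sum.elim z (fun i ↦ -z i) ℓ = ∑ i, (p (.inl i) - p (.inr i)) * z i := by
  simp only [Fintype.sum_sum_type, Sum.elim_inl, Sum.elim_inr, mul_neg, sum_neg_distrib, sub_mul,
    sum_sub_distrib, ← sub_eq_add_neg]

/-- **Regret of entropic follow-the-regularized-leader over the ℓ¹ ball.**
Let `k ≥ 1` and let `(Z t)_{t ≥ 1}` be vectors in `[-1,1]^k`.  Form the augmented vectors
`Z̃ t = (Z t, -Z t) ∈ [-1,1]^{2k}`, the cumulative sums `G t = ∑_{j=1}^{t-1} Z̃ j`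
(so `G 1 = 0`), the softmax (FTRL) iterates
`v t ℓ = exp(√(ln(2k)/t) · G t ℓ) / ∑_{ℓ'} exp(√(ln(2k)/t) · G t ℓ')` on the simplex of
`ℝ^{2k}`, and `u t = v t⁺ - v t⁻`.  Then for every `t ≥ 1`,
`∑_{j=1}^t ⟪u j, Z j⟫ ≥ max_{‖u‖₁ ≤ 1} ∑_{j=1}^t ⟪u, Z j⟫ - 2 √(t ln (2k))`. -/
theorem ftrl_l1_ball_regret {k : ℕ} (hk : 1 ≤ k)
    (Z : ℕ → Fin k → ℝ)
    (hZbdd : ∀ t : ℕ, 1 ≤ t → ∀ i, Z t i ∈ Set.Icc (-1 : ℝ) 1)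
    (Ztilde : ℕ → (Fin k ⊕ Fin k) → ℝ)
    (hZtilde : ∀ t : ℕ, Ztilde t = Sum.elim (Z t) (fun i => -(Z t i)))
    (G : ℕ → (Fin k ⊕ Fin k) → ℝ)
    (hG : ∀ t : ℕ, ∀ ℓ, G t ℓ = ∑ j ∈ Finset.Icc 1 (t - 1), Ztilde j ℓ)
    (v : ℕ → (Fin k ⊕ Fin k) → ℝ)
    (hv : ∀ t : ℕ, 1 ≤ t → ∀ ℓ,
      v t ℓ = Real.exp (Real.sqrt (Real.log (2 * k) / t) * G t ℓ) /
        ∑ ℓ' : Fin k ⊕ Fin k, Real.exp (Real.sqrt (Real.log (2 * k) / t) * G t ℓ'))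
    (u : ℕ → Fin k → ℝ)
    (hu : ∀ t : ℕ, ∀ i, u t i = v t (Sum.inl i) - v t (Sum.inr i)) :
    ∀ t : ℕ, 1 ≤ t → ∀ w : Fin k → ℝ, (∑ i, |w i|) ≤ 1 →
      (∑ j ∈ Finset.Icc 1 t, ∑ i, w i * Z j i) - 2 * Real.sqrt (t * Real.log (2 * k)) ≤
        ∑ j ∈ Finset.Icc 1 t, ∑ i, u j i * Z j i := by
  intro t ht w hw
  have : NeZero k := ⟨by omega⟩
  have hcard : (Fintype.card (Fin k ⊕ Fin k) : ℝ) = 2 * k := by simp; ring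
  have hZtilde_mem (j : ℕ) (hj : 1 ≤ j) (ℓ) : Ztilde j ℓ ∈ Set.Icc (-1 : ℝ) 1 := by
    rcases ℓ with i | i <;> simpa [hZtilde, neg_le, and_comm] using hZbdd j hj i
  have hG₁ : G 1 = 0 := funext fun ℓ ↦ by simp [hG]
  have hG_succ (j : ℕ) (hj : 1 ≤ j) : G (j + 1) = G j + Ztilde j := by
    obtain ⟨r, rfl⟩ := Nat.exists_eq_add_of_le' hj
    funext ℓ
    simp [hG, sum_Icc_succ_top]
  have hgain (j : ℕ) (hj : j ∈ Icc 1 t) : ∑ ℓ, ExponentialWeights.gibbs √(log (2 * k) / j) (G j) ℓ *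
      Ztilde j ℓ = ∑ i, u j i * Z j i := by
    have hvj : ExponentialWeights.gibbs √(log (2 * k) / j) (G j) = v j :=
      funext fun ℓ ↦ (hv j (mem_Icc.mp hj).1 ℓ).symm
    simp only [hvj, hZtilde, sum_mul_sum_elim_neg, hu]
  set R := ∑ j ∈ Icc 1 t, ∑ i, u j i * Z j i + 2 * √(t * log (2 * k))
  have hregret (ℓ) : G (t + 1) ℓ ≤ R := by
    have := ExponentialWeights.regret_le_two_sqrt (by simp; omega) hZtilde_mem hG₁ hG_succ ht ℓ
    rwa [hcard, sum_congr rfl hgain] at this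
  have hcum (i : Fin k) : |∑ j ∈ Icc 1 t, Z j i| ≤ R := by
    have hl := hregret (.inl i)
    have hr := hregret (.inr i)
    simp only [hG, hZtilde, Nat.add_sub_cancel, Sum.elim_inl, Sum.elim_inr, sum_neg_distrib]
      at hl hr
    exact abs_le.mpr ⟨by linarith, hl⟩
  rw [sub_le_iff_le_add, sum_comm]
  simpa only [← mul_sum] using sum_mul_le_of_sum_abs_le_one hw hcum
end
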